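/- arXiv:2206.09801 — 2 statements merged into one kernel-verified Lean document; each statement's English description precedes it below -/
import Mathlib

section
/- Let p ∉ {2,3,7} be a prime and let a, b ∈ 𝔽_p be such that x²+ax+b is irreducible over 𝔽_p and divides Ĥ_{7,p}(x). Then there exists t ∈ 𝔽_p such that x²+ax+b divides f₇(x,t) in 𝔽_p[x] if and only if B(a,b) = 0 in 𝔽_p, where B(x,y) = x³ + (−5y+8)x² + (−8y²+6y+5)x − y³ − 5y² + 8y − 1. -/
open Polynomial

/-- The Hasse invariant polynomial `Ĥ_{7,l}(x)` of the Tate normal form `E₇`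
over `𝔽_l`. -/
noncomputable def hasseH7 (l : ℕ) [Fact (Nat.Prime l)] : Polynomial (ZMod l) :=
  let r : ℕ := ((1 - legendreSym l (-3)) / 2).toNat
  let s : ℕ := ((1 - legendreSym l (-4)) / 2).toNat
  let n : ℕ := l / 12
  let A : Polynomial (ZMod l) :=
    (X ^ 2 - X + 1) ^ 3 *
      (X ^ 6 - 11 * X ^ 5 + 30 * X ^ 4 - 15 * X ^ 3 - 10 * X ^ 2 + 5 * X + 1) ^ 3
  let Δ : Polynomial (ZMod l) := X ^ 7 * (X - 1) ^ 7 * (X ^ 3 - 8 * X ^ 2 + 5 * X + 1)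
  (X ^ 2 - X + 1) ^ r *
    (X ^ 6 - 11 * X ^ 5 + 30 * X ^ 4 - 15 * X ^ 3 - 10 * X ^ 2 + 5 * X + 1) ^ r *
    (X ^ 12 - 18 * X ^ 11 + 117 * X ^ 10 - 354 * X ^ 9 + 570 * X ^ 8 - 486 * X ^ 7
        + 273 * X ^ 6 - 222 * X ^ 5 + 174 * X ^ 4 - 46 * X ^ 3 - 15 * X ^ 2 + 6 * X + 1) ^ s *
    ∑ k ∈ Finset.range (n + 1),
      C (((2 * n + s).choose (2 * k + s) : ZMod l) * ((2 * n - 2 * k).choose (n - k) : ZMod l)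
          * (-432 : ZMod l) ^ (n - k)) *
        (A - 1728 * Δ) ^ k * Δ ^ (n - k)

/-- The polynomial `f₇(x,t) = (x²-x+1)³ - t·x(x-1)(x³-8x²+5x+1)`. -/
noncomputable def f7poly {R : Type*} [CommRing R] (t : R) : Polynomial R :=
  (X ^ 2 - X + 1) ^ 3 - C t * (X * (X - 1) * (X ^ 3 - 8 * X ^ 2 + 5 * X + 1))

private lemma quad_deg {p : ℕ} [Fact (Nat.Prime p)] (a b : ZMod p) :
    (X ^ 2 + C a * X + C b : Polynomial (ZMod p)).degree = 2 := by
  compute_degree!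

private lemma quad_dvd_lin {p : ℕ} [Fact (Nat.Prime p)] {a b c1 c0 : ZMod p}
    (h : (X ^ 2 + C a * X + C b : Polynomial (ZMod p)) ∣ (C c1 * X + C c0)) :
    c1 = 0 ∧ c0 = 0 := by
  have h0 : (C c1 * X + C c0 : Polynomial (ZMod p)) = 0 :=
    Polynomial.eq_zero_of_dvd_of_degree_lt h (by
      rw [quad_deg a b]
      exact lt_of_le_of_lt Polynomial.degree_linear_le (by norm_num))
  constructor
  · simpa using congrArg (fun f : Polynomial (ZMod p) => f.coeff 1) h0
  · simpa using congrArg (fun f : Polynomial (ZMod p) => f.coeff 0) h0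

private lemma f7_eq {p : ℕ} [Fact (Nat.Prime p)] (a b t : ZMod p) :
    (f7poly t : Polynomial (ZMod p)) =
      (X ^ 2 + C a * X + C b) * (((6 + (-6)*C b + (C b)^2 + 7*C a + (-6)*C a*C b + 6*(C a)^2 + (-3)*(C a)^2*C b + 3*(C a)^3 + (C a)^4) + ((-7) + 3*C b + (-6)*C a + 2*C a*C b + (-3)*(C a)^2 + -(C a)^3)*X + (6 + -C b + 3*C a + (C a)^2)*X^2 + ((-3) + -C a)*X^3 + X^4) - C t * (((-4) + 9*C b + (-13)*C a + 2*C a*C b + (-9)*(C a)^2 + -(C a)^3) + (13 + -C b + 9*C a + (C a)^2)*X + ((-9) + -C a)*X^2 + X^3))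
        + (C (((-3) + 7*b + (-3)*b^2 + (-6)*a + 12*a*b + (-3)*a*b^2 + (-7)*a^2 + 9*a^2*b + (-6)*a^3 + 4*a^3*b + (-3)*a^4 + -a^5) - t * ((-1) + (-13)*b + b^2 + 4*a + (-18)*a*b + 13*a^2 + (-3)*a^2*b + 9*a^3 + a^4)) * X + C ((1 + (-6)*b + 6*b^2 + -b^3 + (-7)*a*b + 6*a*b^2 + (-6)*a^2*b + 3*a^2*b^2 + (-3)*a^3*b + -a^4*b) - t * (4*b + (-9)*b^2 + 13*a*b + (-2)*a*b^2 + 9*a^2*b + a^3*b))) := by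
  unfold f7poly
  simp only [map_add, map_sub, map_mul, map_pow, map_neg, map_ofNat, map_one]
  ring

private lemma f7_dvd_iff {p : ℕ} [Fact (Nat.Prime p)] (a b t : ZMod p) :
    (X ^ 2 + C a * X + C b : Polynomial (ZMod p)) ∣ f7poly t ↔
      (((-3) + 7*b + (-3)*b^2 + (-6)*a + 12*a*b + (-3)*a*b^2 + (-7)*a^2 + 9*a^2*b + (-6)*a^3 + 4*a^3*b + (-3)*a^4 + -a^5) - t * ((-1) + (-13)*b + b^2 + 4*a + (-18)*a*b + 13*a^2 + (-3)*a^2*b + 9*a^3 + a^4) = 0 ∧ (1 + (-6)*b + 6*b^2 + -b^3 + (-7)*a*b + 6*a*b^2 + (-6)*a^2*b + 3*a^2*b^2 + (-3)*a^3*b + -a^4*b) - t * (4*b + (-9)*b^2 + 13*a*b + (-2)*a*b^2 + 9*a^2*b + a^3*b) = 0) := by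
  rw [f7_eq a b t, dvd_add_right (Dvd.intro _ rfl)]
  constructor
  · exact quad_dvd_lin
  · rintro ⟨h1, h0⟩
    rw [h1, h0]
    simp

private lemma D_eq {p : ℕ} [Fact (Nat.Prime p)] (a b : ZMod p) :
    (X * (X - 1) * (X ^ 3 - 8 * X ^ 2 + 5 * X + 1) : Polynomial (ZMod p)) =
      (X ^ 2 + C a * X + C b) * (((-4) + 9*C b + (-13)*C a + 2*C a*C b + (-9)*(C a)^2 + -(C a)^3) + (13 + -C b + 9*C a + (C a)^2)*X + ((-9) + -C a)*X^2 + X^3) + (C ((-1) + (-13)*b + b^2 + 4*a + (-18)*a*b + 13*a^2 + (-3)*a^2*b + 9*a^3 + a^4) * X + C (4*b + (-9)*b^2 + 13*a*b + (-2)*a*b^2 + 9*a^2*b + a^3*b)) := by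
  simp only [map_add, map_sub, map_mul, map_pow, map_neg, map_ofNat, map_one]
  ring

private lemma cubic_eq {p : ℕ} [Fact (Nat.Prime p)] (a b : ZMod p) :
    (X ^ 3 - 8 * X ^ 2 + 5 * X + 1 : Polynomial (ZMod p)) =
      (X ^ 2 + C a * X + C b) * (X - 8 - C a)
        + (C (a^2 + 8*a + 5 - b) * X + C (a*b + 8*b + 1)) := by
  simp only [map_add, map_sub, map_mul, map_pow, map_neg, map_ofNat, map_one]
  ring

private lemma E_ne_zero {p : ℕ} [Fact (Nat.Prime p)] (hp2 : p ≠ 2) (a b : ZMod p)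
    (hirr : Irreducible (X ^ 2 + C a * X + C b : Polynomial (ZMod p))) :
    (1 + 3*b + b^2 + a + a*b : ZMod p) ≠ 0 := by
  intro hE
  have hb1 : b + 1 ≠ 0 := by
    intro h
    have : (1 : ZMod p) = 0 := by linear_combination -hE + (a + b + 2) * h
    exact one_ne_zero this
  have h2 : (2 : ZMod p) ≠ 0 := by
    intro h
    apply hp2
    have h' : ((2:ℕ) : ZMod p) = 0 := by exact_mod_cast h
    have := (ZMod.natCast_eq_zero_iff 2 p).mp h'
    exact (Nat.prime_dvd_prime_iff_eq Fact.out Nat.prime_two).mp this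
  have e1 : (b + 1) * (b + 1)⁻¹ = 1 := mul_inv_cancel₀ hb1
  have e2 : (2 : ZMod p) * 2⁻¹ = 1 := mul_inv_cancel₀ h2
  have key : ((2*(b+1))^2 : ZMod p) *
      ((((b^2+b+1) * (b+1)⁻¹ - a) * 2⁻¹)^2
        + a * (((b^2+b+1) * (b+1)⁻¹ - a) * 2⁻¹) + b) = 0 := by
    linear_combination
      ((b+1)^2 * ((b^2+b+1)*(b+1)⁻¹ - a) *
        (((b^2+b+1)*(b+1)⁻¹ - a)*(2*(2:ZMod p)⁻¹+1) + 2*a)) * e2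
      + ((b^2+b+1)^2 * ((b+1)*(b+1)⁻¹ + 1)) * e1
      + (b^2 + 3*b + 1 - a*(b+1)) * hE
  have hnz : ((2*(b+1))^2 : ZMod p) ≠ 0 := pow_ne_zero _ (mul_ne_zero h2 hb1)
  have hroot : (((b^2+b+1) * (b+1)⁻¹ - a) * 2⁻¹)^2
      + a * (((b^2+b+1) * (b+1)⁻¹ - a) * 2⁻¹) + b = 0 :=
    (mul_eq_zero.mp key).resolve_left hnz
  set r : ZMod p := ((b^2+b+1) * (b+1)⁻¹ - a) * 2⁻¹ with hr
  have hC : (C r)^2 + C a * C r + C b = (0 : Polynomial (ZMod p)) := by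
    have := congrArg (C : ZMod p →+* Polynomial (ZMod p)) hroot
    simpa only [map_add, map_mul, map_pow, map_zero] using this
  have hfact : (X ^ 2 + C a * X + C b : Polynomial (ZMod p))
      = (X - C r) * (X + C a + C r) := by
    linear_combination hC
  rcases hirr.isUnit_or_isUnit hfact with hu | hu
  · exact Polynomial.not_isUnit_X_sub_C r hu
  · have hd := Polynomial.degree_eq_zero_of_isUnit hu
    have hd1 : (X + C a + C r : Polynomial (ZMod p)).degree = 1 := by
      compute_degree!
    rw [hd1] at hd
    exact absurd hd (by norm_num)

/-- Lemma 1: an irreducible quadratic factor `x²+ax+b` of `Ĥ_{7,p}` divides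
`f₇(x,t)` for some `t ∈ 𝔽_p` if and only if `B(a,b) = 0`, where
`B(x,y) = x³ + (-5y+8)x² + (-8y²+6y+5)x - y³ - 5y² + 8y - 1`. -/
theorem quadratic_factor_divides_f7_iff (p : ℕ) [Fact (Nat.Prime p)]
    (hp2 : p ≠ 2) (hp3 : p ≠ 3) (hp7 : p ≠ 7) (a b : ZMod p)
    (hirr : Irreducible (X ^ 2 + C a * X + C b : Polynomial (ZMod p)))
    (hdvd : (X ^ 2 + C a * X + C b : Polynomial (ZMod p)) ∣ hasseH7 p) :
    (∃ t : ZMod p, (X ^ 2 + C a * X + C b : Polynomial (ZMod p)) ∣ f7poly t) ↔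
      a ^ 3 + (-5 * b + 8) * a ^ 2 + (-8 * b ^ 2 + 6 * b + 5) * a
        - b ^ 3 - 5 * b ^ 2 + 8 * b - 1 = 0 := by
  constructor
  · rintro ⟨t, ht⟩
    obtain ⟨h1, h0⟩ := (f7_dvd_iff a b t).mp ht
    have hBE : ((a^3 + (-5*b+8)*a^2 + (-8*b^2+6*b+5)*a - b^3 - 5*b^2 + 8*b - 1) : ZMod p) * (1 + 3*b + b^2 + a + a*b) = 0 := by
      linear_combination (-(4*b + (-9)*b^2 + 13*a*b + (-2)*a*b^2 + 9*a^2*b + a^3*b)) * h1 + ((-1) + (-13)*b + b^2 + 4*a + (-18)*a*b + 13*a^2 + (-3)*a^2*b + 9*a^3 + a^4) * h0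
    rcases mul_eq_zero.mp hBE with h | h
    · linear_combination h
    · exact absurd h (E_ne_zero hp2 a b hirr)
  · intro hB
    have hnd : ¬ ((((-1) + (-13)*b + b^2 + 4*a + (-18)*a*b + 13*a^2 + (-3)*a^2*b + 9*a^3 + a^4) : ZMod p) = 0 ∧ ((4*b + (-9)*b^2 + 13*a*b + (-2)*a*b^2 + 9*a^2*b + a^3*b) : ZMod p) = 0) := by
      rintro ⟨h1, h0⟩
      have hqD : (X ^ 2 + C a * X + C b : Polynomial (ZMod p)) ∣
          X * (X - 1) * (X ^ 3 - 8 * X ^ 2 + 5 * X + 1) := by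
        have hD : (X * (X - 1) * (X ^ 3 - 8 * X ^ 2 + 5 * X + 1) : Polynomial (ZMod p))
            = (X ^ 2 + C a * X + C b) * (((-4) + 9*C b + (-13)*C a + 2*C a*C b + (-9)*(C a)^2 + -(C a)^3) + (13 + -C b + 9*C a + (C a)^2)*X + ((-9) + -C a)*X^2 + X^3) := by
          rw [D_eq a b, h1, h0]
          simp
        rw [hD]
        exact Dvd.intro _ rfl
      have hq : Prime (X ^ 2 + C a * X + C b : Polynomial (ZMod p)) :=
        hirr.prime
      have hcubic : (X ^ 2 + C a * X + C b : Polynomial (ZMod p)) ∣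
          (X ^ 3 - 8 * X ^ 2 + 5 * X + 1) := by
        rcases hq.2.2 _ _ hqD with h | h
        · rcases hq.2.2 _ _ h with h | h
          · have hx0 : (X : Polynomial (ZMod p)) = 0 :=
              Polynomial.eq_zero_of_dvd_of_degree_lt h
                (by rw [quad_deg a b, Polynomial.degree_X]; norm_num)
            exact absurd hx0 Polynomial.X_ne_zero
          · have hx1 : (X - 1 : Polynomial (ZMod p)) = 0 :=
              Polynomial.eq_zero_of_dvd_of_degree_lt h
                (by
                  rw [quad_deg a b]
                  have : (X - 1 : Polynomial (ZMod p)).degree = 1 := by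
                    compute_degree!
                  rw [this]; norm_num)
            have := congrArg (Polynomial.eval 0) hx1
            simp at this
        · exact h
      rw [cubic_eq a b, dvd_add_right (Dvd.intro _ rfl)] at hcubic
      obtain ⟨he1, he0⟩ := quad_dvd_lin hcubic
      have hb' : b = a^2 + 8*a + 5 := by linear_combination -he1
      subst hb'
      have h49 : (49 : ZMod p) = 0 := by
        linear_combination (-(287 + 1098*a + 1188*a^2 + 316*a^3 + 31*a^4 + a^5)) * he0
          + (-(56 + 15*a + a^2)) * hB
      have h49' : ((49:ℕ) : ZMod p) = 0 := by exact_mod_cast h49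
      have hdvd49 := (ZMod.natCast_eq_zero_iff 49 p).mp h49'
      have h72 : p ∣ 7 ^ 2 := by norm_num; exact hdvd49
      have hdvd7 : p ∣ 7 := Nat.Prime.dvd_of_dvd_pow Fact.out h72
      exact hp7 ((Nat.prime_dvd_prime_iff_eq Fact.out (by norm_num)).mp hdvd7)
    have hcross : (((-3) + 7*b + (-3)*b^2 + (-6)*a + 12*a*b + (-3)*a*b^2 + (-7)*a^2 + 9*a^2*b + (-6)*a^3 + 4*a^3*b + (-3)*a^4 + -a^5) : ZMod p) * (4*b + (-9)*b^2 + 13*a*b + (-2)*a*b^2 + 9*a^2*b + a^3*b) - (1 + (-6)*b + 6*b^2 + -b^3 + (-7)*a*b + 6*a*b^2 + (-6)*a^2*b + 3*a^2*b^2 + (-3)*a^3*b + -a^4*b) * ((-1) + (-13)*b + b^2 + 4*a + (-18)*a*b + 13*a^2 + (-3)*a^2*b + 9*a^3 + a^4) = 0 := by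
      linear_combination (-(1 + 3*b + b^2 + a + a*b)) * hB
    by_cases hd1 : (((-1) + (-13)*b + b^2 + 4*a + (-18)*a*b + 13*a^2 + (-3)*a^2*b + 9*a^3 + a^4) : ZMod p) = 0
    · have hd0 : ((4*b + (-9)*b^2 + 13*a*b + (-2)*a*b^2 + 9*a^2*b + a^3*b) : ZMod p) ≠ 0 := fun h => hnd ⟨hd1, h⟩
      refine ⟨(1 + (-6)*b + 6*b^2 + -b^3 + (-7)*a*b + 6*a*b^2 + (-6)*a^2*b + 3*a^2*b^2 + (-3)*a^3*b + -a^4*b) * (4*b + (-9)*b^2 + 13*a*b + (-2)*a*b^2 + 9*a^2*b + a^3*b)⁻¹, (f7_dvd_iff a b _).mpr ⟨?_, ?_⟩⟩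
      · have e0 : ((4*b + (-9)*b^2 + 13*a*b + (-2)*a*b^2 + 9*a^2*b + a^3*b) : ZMod p) * (4*b + (-9)*b^2 + 13*a*b + (-2)*a*b^2 + 9*a^2*b + a^3*b)⁻¹ = 1 := mul_inv_cancel₀ hd0
        have hA1D0 : (((-3) + 7*b + (-3)*b^2 + (-6)*a + 12*a*b + (-3)*a*b^2 + (-7)*a^2 + 9*a^2*b + (-6)*a^3 + 4*a^3*b + (-3)*a^4 + -a^5) : ZMod p) * (4*b + (-9)*b^2 + 13*a*b + (-2)*a*b^2 + 9*a^2*b + a^3*b) = 0 := by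
          linear_combination hcross + (1 + (-6)*b + 6*b^2 + -b^3 + (-7)*a*b + 6*a*b^2 + (-6)*a^2*b + 3*a^2*b^2 + (-3)*a^3*b + -a^4*b) * hd1
        have hA1 : (((-3) + 7*b + (-3)*b^2 + (-6)*a + 12*a*b + (-3)*a*b^2 + (-7)*a^2 + 9*a^2*b + (-6)*a^3 + 4*a^3*b + (-3)*a^4 + -a^5) : ZMod p) = 0 := (mul_eq_zero.mp hA1D0).resolve_right hd0
        linear_combination hA1 + (-((1 + (-6)*b + 6*b^2 + -b^3 + (-7)*a*b + 6*a*b^2 + (-6)*a^2*b + 3*a^2*b^2 + (-3)*a^3*b + -a^4*b) * (4*b + (-9)*b^2 + 13*a*b + (-2)*a*b^2 + 9*a^2*b + a^3*b)⁻¹)) * hd1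
      · have e0 : ((4*b + (-9)*b^2 + 13*a*b + (-2)*a*b^2 + 9*a^2*b + a^3*b) : ZMod p) * (4*b + (-9)*b^2 + 13*a*b + (-2)*a*b^2 + 9*a^2*b + a^3*b)⁻¹ = 1 := mul_inv_cancel₀ hd0
        linear_combination (-(1 + (-6)*b + 6*b^2 + -b^3 + (-7)*a*b + 6*a*b^2 + (-6)*a^2*b + 3*a^2*b^2 + (-3)*a^3*b + -a^4*b)) * e0
    · refine ⟨((-3) + 7*b + (-3)*b^2 + (-6)*a + 12*a*b + (-3)*a*b^2 + (-7)*a^2 + 9*a^2*b + (-6)*a^3 + 4*a^3*b + (-3)*a^4 + -a^5) * ((-1) + (-13)*b + b^2 + 4*a + (-18)*a*b + 13*a^2 + (-3)*a^2*b + 9*a^3 + a^4)⁻¹, (f7_dvd_iff a b _).mpr ⟨?_, ?_⟩⟩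
      · have e1 : (((-1) + (-13)*b + b^2 + 4*a + (-18)*a*b + 13*a^2 + (-3)*a^2*b + 9*a^3 + a^4) : ZMod p) * ((-1) + (-13)*b + b^2 + 4*a + (-18)*a*b + 13*a^2 + (-3)*a^2*b + 9*a^3 + a^4)⁻¹ = 1 := mul_inv_cancel₀ hd1
        linear_combination (-((-3) + 7*b + (-3)*b^2 + (-6)*a + 12*a*b + (-3)*a*b^2 + (-7)*a^2 + 9*a^2*b + (-6)*a^3 + 4*a^3*b + (-3)*a^4 + -a^5)) * e1
      · have e1 : (((-1) + (-13)*b + b^2 + 4*a + (-18)*a*b + 13*a^2 + (-3)*a^2*b + 9*a^3 + a^4) : ZMod p) * ((-1) + (-13)*b + b^2 + 4*a + (-18)*a*b + 13*a^2 + (-3)*a^2*b + 9*a^3 + a^4)⁻¹ = 1 := mul_inv_cancel₀ hd1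
        linear_combination (-(((-1) + (-13)*b + b^2 + 4*a + (-18)*a*b + 13*a^2 + (-3)*a^2*b + 9*a^3 + a^4)⁻¹)) * hcross + (-(1 + (-6)*b + 6*b^2 + -b^3 + (-7)*a*b + 6*a*b^2 + (-6)*a^2*b + 3*a^2*b^2 + (-3)*a^3*b + -a^4*b)) * e1
end

section
/- Let ℚ(h) be the rational function field in one indeterminate h over ℚ, and set z = (h³−3h+1)/(h(h−1)) ∈ ℚ(h). Then the following two identities hold in ℚ(h): (z²−3z+9)(z²−11z+25)³/(z−8) = (h²−h+1)³(h⁶−11h⁵+30h⁴−15h³−10h²+5h+1)³/(h⁷(h−1)⁷(h³−8h²+5h+1)), and (z²−3z+9)(z²+229z+505)³/(z−8)⁷ = (h²−h+1)³(h⁶+229h⁵+270h⁴−1695h³+1430h²−235h+1)³/(h(h−1)(h³−8h²+5h+1)⁷). (Note that z − 8 = (h³−8h²+5h+1)/(h(h−1)) ≠ 0 in ℚ(h), so all quotients are well defined.) -/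
/-!
Substituting `z = (h³ - 3h + 1)/(h(h - 1))` gives `z - 8 = (h³ - 8h² + 5h + 1)/(h(h - 1))`, after
which both identities are polynomial identities in `h`, valid in every field where `h ≠ 0, 1`.
In `ℚ(h)` the generator `h` is neither `0` nor `1`.
-/

section Hauptmodul

variable {K : Type*} [Field K] {h : K}

lemma hauptmodul_sub_eight (h0 : h ≠ 0) (h1 : h - 1 ≠ 0) :
    (h ^ 3 - 3 * h + 1) / (h * (h - 1)) - 8 = (h ^ 3 - 8 * h ^ 2 + 5 * h + 1) / (h * (h - 1)) := by
  field_simp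
  ring

theorem j7_eq_of_hauptmodul (h0 : h ≠ 0) (h1 : h - 1 ≠ 0) {z : K}
    (hz : z = (h ^ 3 - 3 * h + 1) / (h * (h - 1))) :
    (z ^ 2 - 3 * z + 9) * (z ^ 2 - 11 * z + 25) ^ 3 / (z - 8) =
      (h ^ 2 - h + 1) ^ 3 *
          (h ^ 6 - 11 * h ^ 5 + 30 * h ^ 4 - 15 * h ^ 3 - 10 * h ^ 2 + 5 * h + 1) ^ 3 /
        (h ^ 7 * (h - 1) ^ 7 * (h ^ 3 - 8 * h ^ 2 + 5 * h + 1)) := by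
  rw [hz, hauptmodul_sub_eight h0 h1]
  field_simp
  ring

theorem j77_eq_of_hauptmodul (h0 : h ≠ 0) (h1 : h - 1 ≠ 0) {z : K}
    (hz : z = (h ^ 3 - 3 * h + 1) / (h * (h - 1))) :
    (z ^ 2 - 3 * z + 9) * (z ^ 2 + 229 * z + 505) ^ 3 / (z - 8) ^ 7 =
      (h ^ 2 - h + 1) ^ 3 *
          (h ^ 6 + 229 * h ^ 5 + 270 * h ^ 4 - 1695 * h ^ 3 + 1430 * h ^ 2 - 235 * h + 1) ^ 3 /
        (h * (h - 1) * (h ^ 3 - 8 * h ^ 2 + 5 * h + 1) ^ 7) := by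
  rw [hz, hauptmodul_sub_eight h0 h1]
  field_simp
  ring

end Hauptmodul

lemma RatFunc.X_sub_one_ne_zero (K : Type*) [Field K] : (RatFunc.X - 1 : RatFunc K) ≠ 0 := by
  simpa using RatFunc.algebraMap_ne_zero (Polynomial.X_sub_C_ne_zero (1 : K))

/-- The two identities relating the Hauptmoduls `z` of `Γ₀(7)` and `h` of `Γ₁(7)`:
with `z = (h³-3h+1)/(h(h-1))` in `ℚ(h)`, the rational functions
`(z²-3z+9)(z²-11z+25)³/(z-8)` and `(z²-3z+9)(z²+229z+505)³/(z-8)⁷` equal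
`j₇(h)` and `j₇,₇(h)` respectively. -/
theorem z_identities_in_ratfunc :
    ∀ h : RatFunc ℚ, h = RatFunc.X →
      ∀ z : RatFunc ℚ, z = (h ^ 3 - 3 * h + 1) / (h * (h - 1)) →
        (z ^ 2 - 3 * z + 9) * (z ^ 2 - 11 * z + 25) ^ 3 / (z - 8) =
            (h ^ 2 - h + 1) ^ 3 *
                (h ^ 6 - 11 * h ^ 5 + 30 * h ^ 4 - 15 * h ^ 3 - 10 * h ^ 2 + 5 * h + 1) ^ 3 /
              (h ^ 7 * (h - 1) ^ 7 * (h ^ 3 - 8 * h ^ 2 + 5 * h + 1)) ∧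
        (z ^ 2 - 3 * z + 9) * (z ^ 2 + 229 * z + 505) ^ 3 / (z - 8) ^ 7 =
            (h ^ 2 - h + 1) ^ 3 *
                (h ^ 6 + 229 * h ^ 5 + 270 * h ^ 4 - 1695 * h ^ 3 + 1430 * h ^ 2
                  - 235 * h + 1) ^ 3 /
              (h * (h - 1) * (h ^ 3 - 8 * h ^ 2 + 5 * h + 1) ^ 7) := by
  rintro h rfl z hz
  exact ⟨j7_eq_of_hauptmodul RatFunc.X_ne_zero (RatFunc.X_sub_one_ne_zero ℚ) hz,
    j77_eq_of_hauptmodul RatFunc.X_ne_zero (RatFunc.X_sub_one_ne_zero ℚ) hz⟩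
end
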